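/- Let C ⊆ L⁰₊ be convex with 1 ∈ C, suppose cs_1(C) is bounded in probability, and let S := { f ∈ L⁰₊ : 0 ≤ f ≤ h a.s. for some h ∈ cs_1(C) } be the solid hull of cs_1(C). Then S ∈ CS_1(C) (i.e., C ⊆ S, S is convex and closed in probability, and f ∈ S, δ ≥ 0, (1+δ)f − δ ∈ L⁰₊ imply (1+δ)f − δ ∈ S), and 1 is maximal in S. -/

import Mathlib

open MeasureTheory Filter Set

noncomputable section

variable {Ω : Type*} [MeasurableSpace Ω]

/-- The nonnegative orthant `L⁰₊` of `L⁰`: (a.e. classes of) random variables that are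
a.e. nonnegative.  We work with representatives, requiring a.e.-measurability. -/
def L0plus (P : Measure Ω) : Set (Ω → ℝ) :=
  {f | AEMeasurable f P ∧ 0 ≤ᵐ[P] f}

/-- A set `A ⊆ L⁰₊` is bounded (in probability) if `lim_{ℓ→∞} sup_{f∈A} P[f>ℓ] = 0`. -/
def BoundedInProb (P : Measure Ω) (A : Set (Ω → ℝ)) : Prop :=
  Tendsto (fun ℓ : ℝ => ⨆ f ∈ A, P {ω | ℓ < f ω}) atTop (nhds 0)

/-- A set `K` is closed in probability: it contains every (a.e.-measurable) limit in
measure of sequences from `K`.  (Convergence in probability is metrizable, so sequential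
closedness is closedness.) -/
def ClosedInProb (P : Measure Ω) (K : Set (Ω → ℝ)) : Prop :=
  ∀ (f : ℕ → Ω → ℝ) (g : Ω → ℝ), (∀ n, f n ∈ K) → AEMeasurable g P →
    TendstoInMeasure P f atTop g → g ∈ K

/-- `g` is strictly positive on `C`: `P[f > 0, g = 0] = 0` for every `f ∈ C`. -/
def StrictlyPositiveOn (P : Measure Ω) (C : Set (Ω → ℝ)) (g : Ω → ℝ) : Prop :=
  ∀ f ∈ C, P ({ω | 0 < f ω} ∩ {ω | g ω = 0}) = 0

/-- `Q` is a probability measure equivalent to `P`. -/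
def EquivProb (P Q : Measure Ω) : Prop :=
  IsProbabilityMeasure Q ∧ Q ≪ P ∧ P ≪ Q

/-- `g` is a numéraire of `C`: it is strictly positive on `C` and there is an equivalent
probability `Q` with `E_Q[(f/g)·1_{g>0}] ≤ Q[g>0]` for all `f ∈ C`. -/
def IsNumeraire (P : Measure Ω) (C : Set (Ω → ℝ)) (g : Ω → ℝ) : Prop :=
  StrictlyPositiveOn P C g ∧
    ∃ Q : Measure Ω, EquivProb P Q ∧
      ∀ f ∈ C, (∫⁻ ω in {ω | 0 < g ω}, ENNReal.ofReal (f ω / g ω) ∂Q) ≤ Q {ω | 0 < g ω}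

/-- The class `CS_g(C)` of subsets `K` of `L⁰₊` with (CS1) `C ⊆ K`, (CS2) `K` convex and
closed in probability, (CS3) `f ∈ K`, `δ ≥ 0`, `(1+δ)f − δg ∈ L⁰₊` imply `(1+δ)f − δg ∈ K`. -/
def CSclass (P : Measure Ω) (C : Set (Ω → ℝ)) (g : Ω → ℝ) : Set (Set (Ω → ℝ)) :=
  {K | K ⊆ L0plus P ∧ C ⊆ K ∧ Convex ℝ K ∧ ClosedInProb P K ∧
    ∀ f ∈ K, ∀ δ : ℝ, 0 ≤ δ →
      (fun ω => (1 + δ) * f ω - δ * g ω) ∈ L0plus P →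
      (fun ω => (1 + δ) * f ω - δ * g ω) ∈ K}

/-- `cs_g(C)`, the smallest element of `CS_g(C)`. -/
def csSet (P : Measure Ω) (C : Set (Ω → ℝ)) (g : Ω → ℝ) : Set (Ω → ℝ) :=
  ⋂ K ∈ CSclass P C g, K

/-- The solid hull of `K` in `L⁰₊`. -/
def SolidHull (P : Measure Ω) (K : Set (Ω → ℝ)) : Set (Ω → ℝ) :=
  {f | f ∈ L0plus P ∧ ∃ h ∈ K, f ≤ᵐ[P] h}

/-- `L∞`: essentially bounded (a.e.-measurable) random variables. -/
def Linf (P : Measure Ω) : Set (Ω → ℝ) :=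
  {f | AEMeasurable f P ∧ ∃ c : ℝ, ∀ᵐ ω ∂P, |f ω| ≤ c}

/-- `L∞₊ = L⁰₊ ∩ L∞`. -/
def LinfPlus (P : Measure Ω) : Set (Ω → ℝ) := L0plus P ∩ Linf P

/-- `L` is solid: `0 ≤ u ≤ h` a.s. with `h ∈ L` implies `u ∈ L`. -/
def IsSolid (P : Measure Ω) (L : Set (Ω → ℝ)) : Prop :=
  ∀ u : Ω → ℝ, AEMeasurable u P → 0 ≤ᵐ[P] u → (∃ h ∈ L, u ≤ᵐ[P] h) → u ∈ L

/-- `A_α := α (L − 1) = { α(f − 1) : f ∈ L }`. -/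
def Aset (L : Set (Ω → ℝ)) (α : ℝ) : Set (Ω → ℝ) :=
  (fun f : Ω → ℝ => fun ω => α * (f ω - 1)) '' L

/-- `J := ⋃_{α ≥ 0} A_α`. -/
def Jset (L : Set (Ω → ℝ)) : Set (Ω → ℝ) := ⋃ α ∈ Ici (0 : ℝ), Aset L α

/-- The weak* topology on (representatives of) `L∞`, viewed as the dual of `L¹(P)`:
the topology induced by the maps `φ ↦ ∫ φ·u dP` for integrable `u`. -/
def weakStarTop (P : Measure Ω) : TopologicalSpace (Ω → ℝ) :=
  ⨅ (u : Ω → ℝ) (_ : Integrable u P),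
    TopologicalSpace.induced (fun φ : Ω → ℝ => ∫ ω, φ ω * u ω ∂P) inferInstance

/-- The witness set `K := { h ∈ L⁰₊ : P[h>0, g=0]=0 and E_Q[(h/g)·1_{g>0}] ≤ Q[g>0] }`. -/
def Kwitness (P Q : Measure Ω) (g : Ω → ℝ) : Set (Ω → ℝ) :=
  {h | h ∈ L0plus P ∧ P ({ω | 0 < h ω} ∩ {ω | g ω = 0}) = 0 ∧
    (∫⁻ ω in {ω | 0 < g ω}, ENNReal.ofReal (h ω / g ω) ∂Q) ≤ Q {ω | 0 < g ω}}

/-- The set `C` of the example: outcomes `1 − θ₁ + (θ₁ + θ₂)ξ` for `θ` in the constraint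
set `Θ = { θ ∈ ℝ₊² : θ₂ ≤ √θ₁ ≤ 1 }`. -/
def exampleC (ξ : Ω → ℝ) : Set (Ω → ℝ) :=
  {f | ∃ θ : ℝ × ℝ, (0 ≤ θ.1 ∧ 0 ≤ θ.2 ∧ θ.2 ≤ Real.sqrt θ.1 ∧ Real.sqrt θ.1 ≤ 1) ∧
    f = fun ω => 1 - θ.1 + (θ.1 + θ.2) * ξ ω}

/-!
The only substantial point is that the solid hull is closed in probability. If `f_n ≤ h_n` with
`h_n ∈ cs_1(C)` and `f_n → f` a.s. (along a subsequence of a sequence converging in probability),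
then forward convex combinations of the `h_n` converge a.s., by a Komlós-type lemma for convex
sets bounded in probability; their limit `h` lies in `cs_1(C)` by closedness and dominates `f`.
The Komlós-type lemma comes from maximising the strictly concave functional `E[1 - e^{-f}]` over
the forward convex hulls: near-maximisers are Cauchy in probability, since on the event where two
of them are far apart but both bounded their midpoint would do uniformly better.

Maximality of `1`: if `h ≥ 1` lies in `cs_1(C)`, then so does `(1 + δ) h - δ` for every `δ ≥ 0`,
and it exceeds `δ ε` on `{h > 1 + ε}`; boundedness forces `P[h > 1 + ε] = 0`.
-/

open scoped Topology
open Real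

theorem convex_L0plus (P : Measure Ω) : Convex ℝ (L0plus P) := by
  intro f₁ hf₁ f₂ hf₂ a b ha hb _
  refine ⟨(hf₁.1.const_smul a).add (hf₂.1.const_smul b), ?_⟩
  filter_upwards [hf₁.2, hf₂.2] with ω h₁ h₂
  simp only [Pi.zero_apply, Pi.add_apply, Pi.smul_apply, smul_eq_mul] at h₁ h₂ ⊢
  positivity

theorem closedInProb_L0plus (P : Measure Ω) : ClosedInProb P (L0plus P) := by
  intro f g hf hg hfg
  obtain ⟨ns, -, hns⟩ := hfg.exists_seq_tendsto_ae
  refine ⟨hg, ?_⟩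
  filter_upwards [hns, ae_all_iff.2 fun n => (hf (ns n)).2] with ω hlim hnonneg
  exact ge_of_tendsto' hlim hnonneg

theorem midpoint_mem_L0plus {P : Measure Ω} {f₁ f₂ : Ω → ℝ} (h₁ : f₁ ∈ L0plus P)
    (h₂ : f₂ ∈ L0plus P) :
    (fun ω => (f₁ ω + f₂ ω) / 2) ∈ L0plus P := by
  refine ⟨(h₁.1.add h₂.1).div_const 2, ?_⟩
  filter_upwards [h₁.2, h₂.2] with ω hω₁ hω₂
  simp only [Pi.zero_apply] at hω₁ hω₂ ⊢
  positivity

theorem L0plus_mem_CSclass (P : Measure Ω) {C : Set (Ω → ℝ)} (hC : C ⊆ L0plus P)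
    (g : Ω → ℝ) : L0plus P ∈ CSclass P C g :=
  ⟨subset_rfl, hC, convex_L0plus P, closedInProb_L0plus P, fun _ _ _ _ h => h⟩

theorem csSet_mem_CSclass (P : Measure Ω) {C : Set (Ω → ℝ)} (hC : C ⊆ L0plus P)
    (g : Ω → ℝ) : csSet P C g ∈ CSclass P C g := by
  refine ⟨biInter_subset_of_mem (L0plus_mem_CSclass P hC g), fun f hf => mem_iInter₂.2
    fun K hK => hK.2.1 hf, convex_iInter₂ fun K hK => hK.2.2.1, ?_, ?_⟩
  · exact fun f g hf hg hfg => mem_iInter₂.2 fun K hK =>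
      hK.2.2.2.1 f g (fun n => mem_iInter₂.1 (hf n) K hK) hg hfg
  · exact fun f hf δ hδ hmem => mem_iInter₂.2 fun K hK =>
      hK.2.2.2.2 f (mem_iInter₂.1 hf K hK) δ hδ hmem

theorem BoundedInProb.exists_measureReal_le {P : Measure Ω} {A : Set (Ω → ℝ)}
    (hA : BoundedInProb P A) {ε : ℝ} (hε : 0 < ε) :
    ∃ M, ∀ f ∈ A, P.real {ω | M < f ω} ≤ ε := by
  obtain ⟨M, hM⟩ := (hA.eventually_lt_const (ENNReal.ofReal_pos.2 hε)).exists
  exact ⟨M, fun f hf => ENNReal.toReal_le_of_le_ofReal hε.le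
    ((le_biSup (fun f => P {ω | M < f ω}) hf).trans hM.le)⟩

theorem le_of_tendsto_of_forall_tail_lowerBound {x z : ℕ → ℝ} {a b : ℝ}
    (hx : Tendsto x atTop (𝓝 a)) (hz : Tendsto z atTop (𝓝 b))
    (hxz : ∀ k y, (∀ j ≥ k, y ≤ x j) → y ≤ z k) : a ≤ b := by
  refine le_of_forall_pos_le_add fun ε hε => ?_
  obtain ⟨k₀, hk₀⟩ := eventually_atTop.1 (hx.eventually (lt_mem_nhds (sub_lt_self a hε)))
  have : a - ε ≤ b := ge_of_tendsto hz <| eventually_atTop.2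
    ⟨k₀, fun k hk => hxz k _ fun j hj => (hk₀ j (hk.trans hj)).le⟩
  linarith

theorem ae_forall_tail_lowerBound_of_mem_convexHull {P : Measure Ω} {f d : ℕ → Ω → ℝ}
    (hfd : ∀ j, f j ≤ᵐ[P] d j) (k : ℕ) {φ : Ω → ℝ} (hφ : φ ∈ convexHull ℝ (d '' Ici k)) :
    ∀ᵐ ω ∂P, ∀ y, (∀ j ≥ k, y ≤ f j ω) → y ≤ φ ω := by
  refine convexHull_min (t := {φ | ∀ᵐ ω ∂P, ∀ y, (∀ j ≥ k, y ≤ f j ω) → y ≤ φ ω}) ?_ ?_ hφ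
  · rintro _ ⟨j, hj, rfl⟩
    filter_upwards [hfd j] with ω hω y hy
    exact (hy j hj).trans hω
  · intro φ₁ h₁ φ₂ h₂ a b ha hb hab
    show ∀ᵐ ω ∂P, ∀ y, (∀ j ≥ k, y ≤ f j ω) → y ≤ (a • φ₁ + b • φ₂) ω
    filter_upwards [h₁, h₂] with ω h₁ h₂ y hy
    calc y = a * y + b * y := by rw [← add_mul, hab, one_mul]
      _ ≤ a * φ₁ ω + b * φ₂ ω := by gcongr <;> simp_all
      _ = (a • φ₁ + b • φ₂) ω := rfl

theorem ae_le_of_tendsto_of_mem_convexHull {P : Measure Ω} {f d c : ℕ → Ω → ℝ}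
    {g G : Ω → ℝ} (hfd : ∀ j, f j ≤ᵐ[P] d j) (hc : ∀ k, c k ∈ convexHull ℝ (d '' Ici k))
    (hf : ∀ᵐ ω ∂P, Tendsto (f · ω) atTop (𝓝 (g ω)))
    (hcG : ∀ᵐ ω ∂P, Tendsto (c · ω) atTop (𝓝 (G ω))) : g ≤ᵐ[P] G := by
  have hlow := ae_all_iff.2 fun k => ae_forall_tail_lowerBound_of_mem_convexHull hfd k (hc k)
  filter_upwards [hf, hcG, hlow] with ω hfω hcω hlowω
  exact le_of_tendsto_of_forall_tail_lowerBound hfω hcω hlowω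

theorem one_sub_exp_neg_midpoint (x y : ℝ) :
    1 - exp (-((x + y) / 2)) = (1 - exp (-x)) / 2 + (1 - exp (-y)) / 2
      + (exp (-x / 2) - exp (-y / 2)) ^ 2 / 2 := by
  have hx : exp (-x) = exp (-x / 2) ^ 2 := by rw [← exp_nat_mul]; ring_nf
  have hy : exp (-y) = exp (-y / 2) ^ 2 := by rw [← exp_nat_mul]; ring_nf
  have hxy : exp (-((x + y) / 2)) = exp (-x / 2) * exp (-y / 2) := by rw [← exp_add]; ring_nf
  rw [hx, hy, hxy]
  ring

theorem sq_exp_neg_half_sub_ge {x y M α : ℝ} (hα : 0 ≤ α) (hx : x ≤ M) (hy : y ≤ M)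
    (hxy : α ≤ |x - y|) :
    exp (-M) * (1 - exp (-α / 2)) ^ 2 ≤ (exp (-x / 2) - exp (-y / 2)) ^ 2 := by
  wlog hle : x ≤ y generalizing x y
  · exact (this hy hx (by rwa [abs_sub_comm]) (le_of_not_ge hle)).trans_eq (by ring)
  rw [abs_sub_comm, abs_of_nonneg (sub_nonneg.2 hle)] at hxy
  have hfactor : exp (-x / 2) - exp (-y / 2) = exp (-x / 2) * (1 - exp (-(y - x) / 2)) := by
    rw [mul_sub, mul_one, ← exp_add]; ring_nf
  have hM : exp (-M) = exp (-M / 2) ^ 2 := by rw [← exp_nat_mul]; ring_nf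
  have hgap : 1 - exp (-α / 2) ≤ 1 - exp (-(y - x) / 2) := by gcongr
  have hgap₀ : 0 ≤ 1 - exp (-α / 2) := sub_nonneg.2 (exp_le_one_iff.2 (by linarith))
  rw [hM, ← mul_pow, hfactor]
  gcongr

theorem abs_one_sub_exp_neg_le_one {x : ℝ} (hx : 0 ≤ x) : |1 - exp (-x)| ≤ 1 :=
  have h₀ := exp_pos (-x)
  have h₁ := exp_le_one_iff.2 (neg_nonpos.2 hx)
  abs_le.2 ⟨by linarith, by linarith⟩

def expUtility (P : Measure Ω) (f : Ω → ℝ) : ℝ :=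
  ∫ ω, (1 - exp (-f ω)) ∂P

section Utility

variable {P : Measure Ω} [IsFiniteMeasure P]

theorem integrable_one_sub_exp_neg {f : Ω → ℝ} (hf : f ∈ L0plus P) :
    Integrable (fun ω => 1 - exp (-f ω)) P := by
  have := hf.1
  refine Integrable.of_bound (by fun_prop) 1 ?_
  filter_upwards [hf.2] with ω hω
  exact abs_one_sub_exp_neg_le_one hω

theorem abs_expUtility_le {f : Ω → ℝ} (hf : f ∈ L0plus P) :
    |expUtility P f| ≤ P.real univ := by
  rw [expUtility, ← Real.norm_eq_abs]
  refine (norm_integral_le_of_norm_le_const ?_).trans_eq (one_mul _)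
  filter_upwards [hf.2] with ω hω
  exact abs_one_sub_exp_neg_le_one hω

theorem expUtility_add_le_expUtility_midpoint {f₁ f₂ : Ω → ℝ} (h₁ : f₁ ∈ L0plus P)
    (h₂ : f₂ ∈ L0plus P) {α M : ℝ} (hα : 0 ≤ α) :
    expUtility P f₁ / 2 + expUtility P f₂ / 2 + exp (-M) * (1 - exp (-α / 2)) ^ 2 / 2 *
        P.real {ω | α ≤ |f₁ ω - f₂ ω| ∧ f₁ ω ≤ M ∧ f₂ ω ≤ M}
      ≤ expUtility P (fun ω => (f₁ ω + f₂ ω) / 2) := by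
  set β := exp (-M) * (1 - exp (-α / 2)) ^ 2 / 2
  set Z : Ω → ℝ := fun ω => (exp (-f₁ ω / 2) - exp (-f₂ ω / 2)) ^ 2 / 2
  have i₁ := integrable_one_sub_exp_neg h₁
  have i₂ := integrable_one_sub_exp_neg h₂
  have hsplit : (fun ω => 1 - exp (-((f₁ ω + f₂ ω) / 2)))
      = fun ω => ((1 - exp (-f₁ ω)) / 2 + (1 - exp (-f₂ ω)) / 2) + Z ω :=
    funext fun ω => one_sub_exp_neg_midpoint _ _
  have hZ : Integrable Z P := by
    have hZeq : Z = fun ω => (1 - exp (-((f₁ ω + f₂ ω) / 2)))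
        - ((1 - exp (-f₁ ω)) / 2 + (1 - exp (-f₂ ω)) / 2) := by
      funext ω
      simp only [Z]
      rw [one_sub_exp_neg_midpoint]
      ring
    rw [hZeq]
    exact (integrable_one_sub_exp_neg (midpoint_mem_L0plus h₁ h₂)).sub
      ((i₁.div_const 2).add (i₂.div_const 2))
  have hsub : {ω | α ≤ |f₁ ω - f₂ ω| ∧ f₁ ω ≤ M ∧ f₂ ω ≤ M} ⊆ {ω | β ≤ Z ω} := by
    rintro ω ⟨hd, hω₁, hω₂⟩
    have := sq_exp_neg_half_sub_ge hα hω₁ hω₂ hd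
    simp only [mem_ofPred_eq, β, Z]
    linarith
  have hmarkov : β * P.real {ω | β ≤ Z ω} ≤ ∫ ω, Z ω ∂P :=
    mul_meas_ge_le_integral_of_nonneg (ae_of_all _ fun ω => by positivity) hZ β
  clear_value Z
  calc expUtility P f₁ / 2 + expUtility P f₂ / 2 + β * P.real _
      ≤ expUtility P f₁ / 2 + expUtility P f₂ / 2 + ∫ ω, Z ω ∂P := by
        gcongr
        exact (mul_le_mul_of_nonneg_left (measureReal_mono hsub) (by positivity)).trans hmarkov
    _ = expUtility P (fun ω => (f₁ ω + f₂ ω) / 2) := by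
        simp only [expUtility]
        rw [hsplit, integral_add _ hZ, integral_add, integral_div, integral_div]
        exacts [i₁.div_const 2, i₂.div_const 2, (i₁.div_const 2).add (i₂.div_const 2)]

end Utility

theorem cauchySeq_of_eventually_abs_sub_lt_two_inv_pow {x : ℕ → ℝ}
    (hx : ∀ᶠ k in atTop, |x k - x (k + 1)| < (2⁻¹ : ℝ) ^ k) : CauchySeq x := by
  refine cauchySeq_of_summable_dist <| .of_norm_bounded_eventually_nat
    (summable_geometric_of_lt_one (by norm_num : (0 : ℝ) ≤ 2⁻¹) (by norm_num)) ?_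
  filter_upwards [hx] with k hk
  rw [Real.norm_eq_abs, abs_dist, Real.dist_eq]
  exact hk.le

def CauchyInMeasure (P : Measure Ω) (g : ℕ → Ω → ℝ) : Prop :=
  ∀ ε > 0, ∃ N, ∀ n ≥ N, ∀ m ≥ N, P.real {ω | ε ≤ |g n ω - g m ω|} ≤ ε

theorem CauchyInMeasure.exists_strictMono_tendsto_ae {P : Measure Ω} [IsFiniteMeasure P]
    {g : ℕ → Ω → ℝ} (hcauchy : CauchyInMeasure P g) (hg : ∀ n, AEMeasurable (g n) P) :
    ∃ ns : ℕ → ℕ, StrictMono ns ∧ ∃ G : Ω → ℝ, AEMeasurable G P ∧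
      ∀ᵐ ω ∂P, Tendsto (fun k => g (ns k) ω) atTop (𝓝 (G ω)) := by
  choose N hN using fun k : ℕ => hcauchy ((2⁻¹ : ℝ) ^ k) (by positivity)
  obtain ⟨ns, hns, hNns⟩ := extraction_forall_of_eventually fun k => eventually_ge_atTop (N k)
  set S : ℕ → Set Ω := fun k => {ω | (2⁻¹ : ℝ) ^ k ≤ |g (ns k) ω - g (ns (k + 1)) ω|}
  have hS : ∀ k, P (S k) ≤ ENNReal.ofReal ((2⁻¹ : ℝ) ^ k) := fun k =>
    (ENNReal.le_ofReal_iff_toReal_le (measure_ne_top _ _) (by positivity)).2 <|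
      hN k _ (hNns k) _ ((hNns k).trans (hns (Nat.lt_succ_self k)).le)
  have hsum : ∑' k, P (S k) ≠ ⊤ := by
    refine ne_top_of_le_ne_top ?_ (ENNReal.tsum_le_tsum hS)
    rw [← ENNReal.ofReal_tsum_of_nonneg (fun k => by positivity)
      (summable_geometric_of_lt_one (by norm_num : (0 : ℝ) ≤ 2⁻¹) (by norm_num))]
    exact ENNReal.ofReal_ne_top
  have hconv : ∀ᵐ ω ∂P, ∃ G, Tendsto (fun k => g (ns k) ω) atTop (𝓝 G) := by
    filter_upwards [ae_eventually_notMem hsum] with ω hω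
    refine cauchySeq_tendsto_of_complete (cauchySeq_of_eventually_abs_sub_lt_two_inv_pow ?_)
    filter_upwards [hω] with k hk
    simpa [S] using hk
  have hlim : ∀ᵐ ω ∂P, Tendsto (fun k => g (ns k) ω) atTop
      (𝓝 (limUnder atTop fun k => g (ns k) ω)) := by
    filter_upwards [hconv] with ω hω
    exact tendsto_nhds_limUnder hω
  exact ⟨ns, hns, _, aemeasurable_of_tendsto_metrizable_ae atTop (fun k => hg (ns k)) hlim, hlim⟩

section Komlos

variable {P : Measure Ω} [IsFiniteMeasure P] {K : Set (Ω → ℝ)}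

theorem exists_near_maximizers_expUtility (hK : K ⊆ L0plus P) (hKc : Convex ℝ K)
    {h : ℕ → Ω → ℝ} (hh : ∀ n, h n ∈ K) :
    ∃ (g : ℕ → Ω → ℝ) (s : ℕ → ℝ) (L : ℝ), (∀ n, g n ∈ K ∩ convexHull ℝ (h '' Ici n)) ∧
      Tendsto s atTop (𝓝 L) ∧ Tendsto (fun n => expUtility P (g n)) atTop (𝓝 L) ∧
      ∀ n m, n ≤ m → expUtility P (fun ω => (g n ω + g m ω) / 2) ≤ s n := by
  set T : ℕ → Set (Ω → ℝ) := fun n => K ∩ convexHull ℝ (h '' Ici n)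
  set s : ℕ → ℝ := fun n => sSup (expUtility P '' T n)
  have hT_anti : Antitone T := fun n m hnm =>
    inter_subset_inter_right _ (convexHull_mono (image_mono (Ici_subset_Ici.2 hnm)))
  have hhT : ∀ n, h n ∈ T n := fun n => ⟨hh n, subset_convexHull ℝ _ ⟨n, self_mem_Ici, rfl⟩⟩
  have hT_ne : ∀ n, (expUtility P '' T n).Nonempty := fun n => ⟨_, mem_image_of_mem _ (hhT n)⟩
  have hT_bdd : ∀ n, BddAbove (expUtility P '' T n) := by
    refine fun n => ⟨P.real univ, ?_⟩
    rintro - ⟨f, hf, rfl⟩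
    exact (le_abs_self _).trans (abs_expUtility_le (hK hf.1))
  have hle_s : ∀ n, ∀ f ∈ T n, expUtility P f ≤ s n := fun n f hf =>
    le_csSup (hT_bdd n) (mem_image_of_mem _ hf)
  have hs_anti : Antitone s := fun n m hnm =>
    csSup_le_csSup (hT_bdd n) (hT_ne m) (image_mono (hT_anti hnm))
  have hs_bdd : BddBelow (range s) := by
    refine ⟨-P.real univ, ?_⟩
    rintro _ ⟨n, rfl⟩
    exact (neg_le_of_abs_le (abs_expUtility_le (hK (hh n)))).trans (hle_s n _ (hhT n))
  have hs : Tendsto s atTop (𝓝 (⨅ n, s n)) := tendsto_atTop_ciInf hs_anti hs_bdd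
  have hsel : ∀ n : ℕ, ∃ f ∈ T n, s n - 1 / (n + 1) < expUtility P f := fun n => by
    obtain ⟨_, ⟨f, hf, rfl⟩, hlt⟩ :=
      exists_lt_of_lt_csSup (hT_ne n) (sub_lt_self (s n) (by positivity : (0 : ℝ) < 1 / (n + 1)))
    exact ⟨f, hf, hlt⟩
  choose g hgT hg using hsel
  refine ⟨g, s, _, hgT, hs, ?_, fun n m hnm => hle_s n _ ?_⟩
  · refine tendsto_of_tendsto_of_tendsto_of_le_of_le ?_ hs (fun n => (hg n).le)
      (fun n => hle_s n _ (hgT n))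
    simpa using hs.sub tendsto_one_div_add_atTop_nhds_zero_nat
  · convert (hKc.inter (convex_convexHull ℝ _)) (hgT n) (hT_anti hnm (hgT m))
      (by norm_num : (0 : ℝ) ≤ 1 / 2) (by norm_num : (0 : ℝ) ≤ 1 / 2) (by norm_num) using 1
    funext ω
    simp only [Pi.add_apply, Pi.smul_apply, smul_eq_mul]
    ring

theorem cauchyInMeasure_of_near_maximizers (hK : K ⊆ L0plus P) (hKb : BoundedInProb P K)
    {g : ℕ → Ω → ℝ} (hg : ∀ n, g n ∈ K) {s : ℕ → ℝ} {L : ℝ} (hs : Tendsto s atTop (𝓝 L))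
    (hU : Tendsto (fun n => expUtility P (g n)) atTop (𝓝 L))
    (hmid : ∀ n m, n ≤ m → expUtility P (fun ω => (g n ω + g m ω) / 2) ≤ s n) :
    CauchyInMeasure P g := by
  intro ε hε
  obtain ⟨M, hM⟩ := hKb.exists_measureReal_le (ε := ε / 4) (by positivity)
  set β := exp (-M) * (1 - exp (-ε / 2)) ^ 2 / 2
  have hβ : 0 < β := by
    have : exp (-ε / 2) < 1 := exp_lt_one_iff.2 (by linarith)
    have : 0 < 1 - exp (-ε / 2) := by linarith
    positivity
  have hclose : ∀ᶠ n in atTop, |s n - L| < β * ε / 4 ∧ |expUtility P (g n) - L| < β * ε / 4 :=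
    (hs.eventually (Metric.ball_mem_nhds _ (by positivity))).and
      (hU.eventually (Metric.ball_mem_nhds _ (by positivity)))
  obtain ⟨N, hN⟩ := eventually_atTop.1 hclose
  have key : ∀ n m, N ≤ n → n ≤ m → P.real {ω | ε ≤ |g n ω - g m ω|} ≤ ε := by
    intro n m hn hnm
    set A := {ω | ε ≤ |g n ω - g m ω| ∧ g n ω ≤ M ∧ g m ω ≤ M}
    have hgap : expUtility P (g n) / 2 + expUtility P (g m) / 2 + β * P.real A
        ≤ expUtility P (fun ω => (g n ω + g m ω) / 2) :=
      expUtility_add_le_expUtility_midpoint (hK (hg n)) (hK (hg m)) hε.le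
    obtain ⟨hsn, hUn⟩ := hN n hn
    obtain ⟨-, hUm⟩ := hN m (hn.trans hnm)
    rw [abs_lt] at hsn hUn hUm
    have hA : β * P.real A < β * (ε / 2) := by linarith [hmid n m hnm]
    have hsplit : {ω | ε ≤ |g n ω - g m ω|} ⊆ A ∪ {ω | M < g n ω} ∪ {ω | M < g m ω} := by
      intro ω hω
      by_cases h₁ : g n ω ≤ M
      · by_cases h₂ : g m ω ≤ M
        · exact Or.inl (Or.inl ⟨hω, h₁, h₂⟩)
        · exact Or.inr (not_le.1 h₂)
      · exact Or.inl (Or.inr (not_le.1 h₁))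
    calc P.real {ω | ε ≤ |g n ω - g m ω|}
        ≤ P.real A + P.real {ω | M < g n ω} + P.real {ω | M < g m ω} :=
          (measureReal_mono hsplit).trans <|
            (measureReal_union_le _ _).trans (by gcongr; exact measureReal_union_le _ _)
      _ ≤ ε / 2 + ε / 4 + ε / 4 := by
          gcongr
          exacts [(lt_of_mul_lt_mul_left hA hβ.le).le, hM _ (hg n), hM _ (hg m)]
      _ = ε := by ring
  refine ⟨N, fun n hn m hm => ?_⟩
  rcases le_total n m with hnm | hmn
  · exact key n m hn hnm
  · simpa only [abs_sub_comm] using key m n hm hmn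

/-- The Komlós-type lemma of Delbaen and Schachermayer. -/
theorem exists_tendsto_ae_of_mem_convexHull (hK : K ⊆ L0plus P) (hKc : Convex ℝ K)
    (hKb : BoundedInProb P K) {h : ℕ → Ω → ℝ} (hh : ∀ n, h n ∈ K) :
    ∃ (c : ℕ → Ω → ℝ) (G : Ω → ℝ), (∀ k, c k ∈ convexHull ℝ (h '' Ici k)) ∧
      AEMeasurable G P ∧ ∀ᵐ ω ∂P, Tendsto (c · ω) atTop (𝓝 (G ω)) := by
  obtain ⟨g, s, L, hg, hs, hU, hmid⟩ := exists_near_maximizers_expUtility hK hKc hh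
  obtain ⟨ns, hns, G, hG, hGlim⟩ :=
    (cauchyInMeasure_of_near_maximizers hK hKb (fun n => (hg n).1) hs hU hmid
      ).exists_strictMono_tendsto_ae fun n => (hK (hg n).1).1
  exact ⟨fun k => g (ns k), G, fun k =>
    convexHull_mono (image_mono (Ici_subset_Ici.2 (hns.id_le k))) (hg (ns k)).2, hG, hGlim⟩

end Komlos

section SolidHull

variable {P : Measure Ω} {C K : Set (Ω → ℝ)} {g : Ω → ℝ}

theorem Convex.solidHull (hK : Convex ℝ K) : Convex ℝ (SolidHull P K) := by
  rintro f₁ ⟨hf₁, h₁, hh₁, hle₁⟩ f₂ ⟨hf₂, h₂, hh₂, hle₂⟩ a b ha hb hab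
  refine ⟨convex_L0plus P hf₁ hf₂ ha hb hab, a • h₁ + b • h₂, hK hh₁ hh₂ ha hb hab, ?_⟩
  filter_upwards [hle₁, hle₂] with ω hω₁ hω₂
  simp only [Pi.add_apply, Pi.smul_apply, smul_eq_mul]
  gcongr

theorem closedInProb_solidHull [IsFiniteMeasure P] (hK : K ⊆ L0plus P) (hKc : Convex ℝ K)
    (hKcl : ClosedInProb P K) (hKb : BoundedInProb P K) : ClosedInProb P (SolidHull P K) := by
  intro f g hf hg hfg
  obtain ⟨ns, -, hns⟩ := hfg.exists_seq_tendsto_ae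
  choose d hdK hfd using fun n => (hf n).2
  obtain ⟨c, G, hc, hG, hcG⟩ := exists_tendsto_ae_of_mem_convexHull hK hKc hKb fun n => hdK (ns n)
  have hcK : ∀ k, c k ∈ K := fun k =>
    hKc.convexHull_subset_iff.2 (image_subset_iff.2 fun n _ => hdK (ns n)) (hc k)
  have hGK : G ∈ K := hKcl c G hcK hG <|
    tendstoInMeasure_of_tendsto_ae (fun k => (hK (hcK k)).1.aestronglyMeasurable) hcG
  exact ⟨closedInProb_L0plus P f g (fun n => (hf n).1) hg hfg, G, hGK,
    ae_le_of_tendsto_of_mem_convexHull (fun j => hfd (ns j)) hc hns hcG⟩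

theorem solidHull_mem_CSclass [IsFiniteMeasure P] (hK : K ∈ CSclass P C g)
    (hKb : BoundedInProb P K) : SolidHull P K ∈ CSclass P C g := by
  obtain ⟨hKL, hCK, hKc, hKcl, hK3⟩ := hK
  refine ⟨fun f hf => hf.1, fun f hf => ⟨hKL (hCK hf), f, hCK hf, EventuallyLE.rfl⟩, hKc.solidHull,
    closedInProb_solidHull hKL hKc hKcl hKb, ?_⟩
  rintro f ⟨hf, h, hh, hfh⟩ δ hδ hF
  have hFle : (fun ω => (1 + δ) * f ω - δ * g ω) ≤ᵐ[P] fun ω => (1 + δ) * h ω - δ * g ω := by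
    filter_upwards [hfh] with ω hω
    gcongr
  have hFh : (fun ω => (1 + δ) * h ω - δ * g ω) ∈ L0plus P := by
    refine ⟨?_, hF.2.trans hFle⟩
    have hsum : (fun ω => (1 + δ) * h ω - δ * g ω)
        = fun ω => ((1 + δ) * f ω - δ * g ω) + (1 + δ) * (h ω - f ω) := by
      funext ω; ring
    rw [hsum]
    exact hF.1.add (((hKL hh).1.sub hf.1).const_mul _)
  exact ⟨hF, _, hK3 h hh δ hδ hFh, hFle⟩

theorem ae_eq_of_le_of_mem_CSclass (hK : K ∈ CSclass P C g) (hKb : BoundedInProb P K)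
    (hg : AEMeasurable g P) {h : Ω → ℝ} (hh : h ∈ K) (hgh : g ≤ᵐ[P] h) : h =ᵐ[P] g := by
  have hh₀ := (hK.1 hh).2
  have hle_add : ∀ ε > 0, ∀ᵐ ω ∂P, h ω ≤ g ω + ε := by
    intro ε hε
    rw [ae_iff]
    simp only [not_le]
    refine nonpos_iff_eq_zero.1 (ge_of_tendsto hKb (eventually_atTop.2 ⟨1, fun ℓ hℓ => ?_⟩))
    have hδ : 0 < ℓ / ε := by positivity
    have hF : (fun ω => (1 + ℓ / ε) * h ω - ℓ / ε * g ω) ∈ L0plus P := by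
      refine ⟨((hK.1 hh).1.const_mul _).sub (hg.const_mul _), ?_⟩
      filter_upwards [hh₀, hgh] with ω hω₀ hω
      simp only [Pi.zero_apply] at hω₀ ⊢
      nlinarith
    refine (measure_mono_ae ?_).trans
      (le_biSup (fun f => P {ω | ℓ < f ω}) (hK.2.2.2.2 h hh _ hδ.le hF))
    filter_upwards [hh₀] with ω hω₀ hω
    simp only [Pi.zero_apply] at hω₀
    change g ω + ε < h ω at hω
    change ℓ < (1 + ℓ / ε) * h ω - ℓ / ε * g ω
    have hgap : ℓ < ℓ / ε * (h ω - g ω) := by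
      calc ℓ = ℓ / ε * ε := (div_mul_cancel₀ ℓ hε.ne').symm
        _ < ℓ / ε * (h ω - g ω) := by gcongr; linarith
    nlinarith
  have hle : h ≤ᵐ[P] g := by
    filter_upwards [ae_all_iff.2 fun n : ℕ => hle_add (1 / (n + 1)) (by positivity)] with ω hω
    have hlim : Tendsto (fun n : ℕ => g ω + 1 / ((n : ℝ) + 1)) atTop (𝓝 (g ω)) := by
      simpa using tendsto_const_nhds.add (tendsto_one_div_add_atTop_nhds_zero_nat (𝕜 := ℝ))
    exact ge_of_tendsto' hlim hω
  exact hle.antisymm hgh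

end SolidHull

theorem solidHull_mem_CSclass_and_one_maximal_general
    (P : Measure Ω) [IsProbabilityMeasure P]
    (C : Set (Ω → ℝ)) (hC : C ⊆ L0plus P)
    (hb : BoundedInProb P (csSet P C (fun _ => (1 : ℝ)))) :
    SolidHull P (csSet P C (fun _ => (1 : ℝ))) ∈ CSclass P C (fun _ => (1 : ℝ)) ∧
    ∀ f ∈ SolidHull P (csSet P C (fun _ => (1 : ℝ))),
      (fun _ => (1 : ℝ)) ≤ᵐ[P] f → f =ᵐ[P] (fun _ => (1 : ℝ)) := by
  have hcs := csSet_mem_CSclass P hC fun _ => (1 : ℝ)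
  refine ⟨solidHull_mem_CSclass hcs hb, ?_⟩
  rintro f ⟨-, h, hh, hfh⟩ h1f
  have hh1 : h =ᵐ[P] fun _ => (1 : ℝ) :=
    ae_eq_of_le_of_mem_CSclass hcs hb aemeasurable_const hh (h1f.trans hfh)
  exact (hfh.trans hh1.le).antisymm h1f

/-- if `1 ∈ C` and `cs_1(C)` is bounded, then the solid hull `S` of
`cs_1(C)` belongs to `CS_1(C)` and `1` is maximal in `S`. -/
theorem solidHull_mem_CSclass_and_one_maximal
    (P : Measure Ω) [IsProbabilityMeasure P]
    (C : Set (Ω → ℝ)) (hC : C ⊆ L0plus P) (hconv : Convex ℝ C)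
    (h1 : (fun _ => (1 : ℝ)) ∈ C)
    (hb : BoundedInProb P (csSet P C (fun _ => (1 : ℝ)))) :
    SolidHull P (csSet P C (fun _ => (1 : ℝ))) ∈ CSclass P C (fun _ => (1 : ℝ)) ∧
    ∀ f ∈ SolidHull P (csSet P C (fun _ => (1 : ℝ))),
      (fun _ => (1 : ℝ)) ≤ᵐ[P] f → f =ᵐ[P] (fun _ => (1 : ℝ)) :=
  solidHull_mem_CSclass_and_one_maximal_general P C hC hb

end
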